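/- Let M be a finite matroid on ground set E = {e_1, …, e_n} with rank function Rank and weights w_1 ≥ w_2 ≥ … ≥ w_n > 0 ordered decreasingly (with w_{n+1} = 0), let p ∈ [0,1] and let τ be a positive integer. Suppose I_1, …, I_τ ⊆ E are sets such that for each t, I_t is a maximum-weight base of the deletion minor M \ (I_1 ∪ … ∪ I_{t−1}), and let Q = I_1 ∪ … ∪ I_τ. Then for every j ∈ {1,…,n} with w_j > w_{j+1}: E[ Rank(Q ∩ R ∩ {e_1, …, e_j}) ] ≥ (1 − (1−p)^τ) · E[ Rank(R ∩ {e_1, …, e_j}) ]. -/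

import Mathlib

open Finset

noncomputable section

variable {E : Type*} [Fintype E] [DecidableEq E]

/-- Probability that an independent-inclusion random subset of `E`, in which each element `e`
is included independently with probability `π e`, is exactly the set `A`. -/
def prodWeight (π : E → ℝ) (A : Finset E) : ℝ :=
  (∏ e ∈ A, π e) * ∏ e ∈ Aᶜ, (1 - π e)

/-- Expectation of `g` under the independent-inclusion random subset with marginals `π`. -/
def expec (π : E → ℝ) (g : Finset E → ℝ) : ℝ :=
  ∑ A : Finset E, prodWeight π A * g A

/-- Total (additive) weight of a finite set. -/
def setWeight (w : E → ℝ) (T : Finset E) : ℝ := ∑ e ∈ T, w e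

/-- Value of a best feasible (w.r.t. `𝓘`) subset of `S`, for the objective `f`. -/
def bestVal (𝓘 : Set (Finset E)) (f : Finset E → ℝ) (S : Finset E) : ℝ :=
  sSup (f '' {T | T ⊆ S ∧ T ∈ 𝓘})

/-- A (finite) matroid on the ground set `E`, given by its independent sets. -/
structure FinMatroid (E : Type*) [Fintype E] [DecidableEq E] where
  Indep : Finset E → Prop
  empty_indep : Indep ∅
  indep_subset : ∀ ⦃S T : Finset E⦄, Indep T → S ⊆ T → Indep S
  indep_exchange : ∀ ⦃S T : Finset E⦄, Indep S → Indep T → S.card < T.card →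
    ∃ e ∈ T, e ∉ S ∧ Indep (insert e S)

/-- The rank function of a matroid: the maximum cardinality of an independent subset of `S`. -/
def FinMatroid.rank (M : FinMatroid E) (S : Finset E) : ℕ :=
  sSup {n | ∃ T ⊆ S, M.Indep T ∧ T.card = n}

/-- `I_1 ∪ ⋯ ∪ I_j` (sets are indexed starting from `1`). -/
def prefixUnion (I : ℕ → Finset E) (j : ℕ) : Finset E :=
  (Finset.Icc 1 j).biUnion I

/-- A nested system of spanning sets for the set system on ground set `G` with rank
function `rk`: each `I_j` lies outside `I_{1:j-1}` and is spanning (full rank) in the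
deletion minor obtained by removing `I_{1:j-1}` from `G`. -/
def IsNSS (rk : Finset E → ℕ) (G : Finset E) (τ : ℕ) (I : ℕ → Finset E) : Prop :=
  ∀ j ∈ Finset.Icc 1 τ,
    I j ⊆ G \ prefixUnion I (j - 1) ∧ rk (I j) = rk (G \ prefixUnion I (j - 1))

/-- `I` is a maximum-`w`-weight independent set of the restriction of `M` to `G`. -/
def IsMaxWeightIndep (M : FinMatroid E) (w : E → ℝ) (G : Finset E) (I : Finset E) : Prop :=
  I ⊆ G ∧ M.Indep I ∧ ∀ J ⊆ G, M.Indep J → setWeight w J ≤ setWeight w I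

/-- `I` is a maximum-`w`-weight base of the restriction (deletion minor) of `M` to `G`. -/
def IsMaxWeightBase (M : FinMatroid E) (w : E → ℝ) (G : Finset E) (I : Finset E) : Prop :=
  I ⊆ G ∧ M.Indep I ∧ M.rank I = M.rank G ∧
    ∀ J ⊆ G, M.Indep J → M.rank J = M.rank G → setWeight w J ≤ setWeight w I

/-- The set `{e_1, …, e_j}` of the `j` heaviest elements (elements of `Fin n` are
identified with `e_1, …, e_n`, so `e_i` is the element `i - 1 : Fin n`). -/
def prefixSet (n j : ℕ) : Finset (Fin n) :=
  Finset.univ.filter fun x => (x : ℕ) + 1 ≤ j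


/-! ### Auxiliary lemmas -/

namespace FinMatroid
variable (M : FinMatroid E)

lemma rank_set_nonempty (S : Finset E) : Set.Nonempty {m | ∃ T ⊆ S, M.Indep T ∧ T.card = m} :=
  ⟨0, ∅, empty_subset _, M.empty_indep, card_empty⟩

lemma rank_set_bdd (S : Finset E) : S.card ∈ upperBounds {m | ∃ T ⊆ S, M.Indep T ∧ T.card = m} := by
  rintro m ⟨T, hTS, _, rfl⟩; exact card_le_card hTS

lemma exists_basis (S : Finset E) : ∃ T ⊆ S, M.Indep T ∧ T.card = M.rank S :=
  Nat.sSup_mem (M.rank_set_nonempty S) ⟨S.card, M.rank_set_bdd S⟩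

lemma card_le_rank {T S : Finset E} (h : T ⊆ S) (hT : M.Indep T) : T.card ≤ M.rank S :=
  le_csSup ⟨S.card, M.rank_set_bdd S⟩ ⟨T, h, hT, rfl⟩

lemma rank_le {S : Finset E} {m : ℕ} (h : ∀ T ⊆ S, M.Indep T → T.card ≤ m) : M.rank S ≤ m :=
  csSup_le (M.rank_set_nonempty S) (by rintro k ⟨T, hTS, hT, rfl⟩; exact h T hTS hT)

lemma rank_mono {S S' : Finset E} (h : S ⊆ S') : M.rank S ≤ M.rank S' :=
  M.rank_le fun T hTS hT => M.card_le_rank (hTS.trans h) hT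

lemma rank_indep {T : Finset E} (hT : M.Indep T) : M.rank T = T.card :=
  le_antisymm (M.rank_le fun _ h _ => card_le_card h) (M.card_le_rank subset_rfl hT)

lemma rank_empty : M.rank ∅ = 0 := by
  simpa using M.rank_indep M.empty_indep

/-- extend an independent set using elements of another independent set -/
lemma exists_extend : ∀ (k : ℕ) (T J : Finset E), M.Indep T → M.Indep J → J.card = T.card + k →
    ∃ B, T ⊆ B ∧ B ⊆ T ∪ J ∧ M.Indep B ∧ B.card = J.card := by
  intro k
  induction k with
  | zero => intro T J hT hJ hc; exact ⟨T, subset_rfl, subset_union_left, hT, hc.symm⟩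
  | succ k ih =>
    intro T J hT hJ hc
    obtain ⟨e, heJ, heT, hins⟩ := M.indep_exchange hT hJ (by omega)
    obtain ⟨B, h1, h2, h3, h4⟩ := ih (insert e T) J hins hJ (by rw [card_insert_of_notMem heT]; omega)
    exact ⟨B, (subset_insert _ _).trans h1, h2.trans (by
      intro x hx; rcases mem_union.mp hx with h | h
      · rcases mem_insert.mp h with rfl | h
        · exact mem_union_right _ heJ
        · exact mem_union_left _ h
      · exact mem_union_right _ h), h3, h4⟩

lemma exists_basis_superset {T S : Finset E} (hTS : T ⊆ S) (hT : M.Indep T) :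
    ∃ B, T ⊆ B ∧ B ⊆ S ∧ M.Indep B ∧ B.card = M.rank S := by
  obtain ⟨J, hJS, hJ, hJc⟩ := M.exists_basis S
  have hle : T.card ≤ J.card := hJc ▸ M.card_le_rank hTS hT
  obtain ⟨B, h1, h2, h3, h4⟩ := M.exists_extend (J.card - T.card) T J hT hJ (by omega)
  exact ⟨B, h1, h2.trans (union_subset hTS hJS), h3, by omega⟩

lemma rank_submod (A B : Finset E) : M.rank (A ∪ B) + M.rank (A ∩ B) ≤ M.rank A + M.rank B := by
  obtain ⟨C, hCsub, hC, hCc⟩ := M.exists_basis (A ∩ B)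
  obtain ⟨D, hCD, hDsub, hD, hDc⟩ := M.exists_basis_superset (hCsub.trans inter_subset_union) hC
  have hA : (D ∩ A).card ≤ M.rank A := M.card_le_rank inter_subset_right (M.indep_subset hD inter_subset_left)
  have hB : (D ∩ B).card ≤ M.rank B := M.card_le_rank inter_subset_right (M.indep_subset hD inter_subset_left)
  have hU : (D ∩ A) ∪ (D ∩ B) = D := by rw [← inter_union_distrib_left]; exact inter_eq_left.mpr hDsub
  have hI : (D ∩ A) ∩ (D ∩ B) = D ∩ (A ∩ B) := by ext x; simp; tauto
  have hCle : C.card ≤ (D ∩ (A ∩ B)).card := card_le_card (subset_inter hCD hCsub)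
  have := card_union_add_card_inter (D ∩ A) (D ∩ B)
  rw [hU, hI] at this
  omega

lemma rank_union_le_of_spanning {J B : Finset E} (h : M.rank (J ∪ B) = M.rank J) (A : Finset E) :
    M.rank (J ∪ A ∪ B) ≤ M.rank (J ∪ A) := by
  have hsub := M.rank_submod (J ∪ A) (J ∪ B)
  have h1 : (J ∪ A) ∪ (J ∪ B) = J ∪ A ∪ B := by ext x; simp; tauto
  have h2 : M.rank J ≤ M.rank ((J ∪ A) ∩ (J ∪ B)) := M.rank_mono (subset_inter subset_union_left subset_union_left)
  rw [h1] at hsub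
  omega

lemma maxweight_base_prefix {wf : E → ℝ} {G It : Finset E} (P : Finset E)
    (h : IsMaxWeightBase M wf G It)
    (hw : ∀ e ∈ P, ∀ f ∉ P, wf f < wf e) :
    M.rank (It ∩ P) = M.rank (G ∩ P) := by
  obtain ⟨hIG, hIind, hIrk, hmax⟩ := h
  have hmono : M.rank (It ∩ P) ≤ M.rank (G ∩ P) :=
    M.rank_mono (inter_subset_inter hIG subset_rfl)
  by_contra hne
  have hlt : M.rank (It ∩ P) < M.rank (G ∩ P) := lt_of_le_of_ne hmono hne
  obtain ⟨K, hKsub, hKind, hKcard⟩ := M.exists_basis (G ∩ P)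
  have hTind : M.Indep (It ∩ P) := M.indep_subset hIind inter_subset_left
  have hTcard : (It ∩ P).card = M.rank (It ∩ P) := (M.rank_indep hTind).symm
  obtain ⟨e, heK, heT, hins⟩ := M.indep_exchange hTind hKind (by omega)
  have heP : e ∈ P := (mem_inter.mp (hKsub heK)).2
  have heG : e ∈ G := (mem_inter.mp (hKsub heK)).1
  have heIt : e ∉ It := fun h' => heT (mem_inter.mpr ⟨h', heP⟩)
  have hItcard : It.card = M.rank G := by rw [← hIrk, M.rank_indep hIind]
  have hTc2 : (insert e (It ∩ P)).card = (It ∩ P).card + 1 := card_insert_of_notMem heT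
  have hle : (insert e (It ∩ P)).card ≤ It.card := by
    have := hKcard ▸ card_le_card hKsub
    have h2 : M.rank (G ∩ P) ≤ M.rank G := M.rank_mono inter_subset_left
    omega
  obtain ⟨B, hTB, hBsub, hBind, hBcard⟩ :=
    M.exists_extend (It.card - (insert e (It ∩ P)).card) (insert e (It ∩ P)) It hins hIind (by omega)
  have hBsub' : B ⊆ insert e It := hBsub.trans (by
    intro x hx
    rcases mem_union.mp hx with h | h
    · rcases mem_insert.mp h with rfl | h
      · exact mem_insert_self _ _
      · exact mem_insert_of_mem (mem_inter.mp h).1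
    · exact mem_insert_of_mem h)
  have heB : e ∈ B := hTB (mem_insert_self _ _)
  have hBG : B ⊆ G := hBsub'.trans (insert_subset heG hIG)
  have hBrk : M.rank B = M.rank G := by rw [M.rank_indep hBind, hBcard, hItcard]
  have hwB : setWeight wf B ≤ setWeight wf It := hmax B hBG hBind hBrk
  have hBeq : B = insert e (B ∩ It) := by
    ext x
    simp only [mem_insert, mem_inter]
    constructor
    · intro hx
      rcases mem_insert.mp (hBsub' hx) with rfl | h
      · exact Or.inl rfl
      · exact Or.inr ⟨hx, h⟩
    · rintro (rfl | ⟨hx, _⟩) <;> [exact heB; exact hx]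
  have heBI : e ∉ B ∩ It := fun h' => heIt (mem_inter.mp h').2
  have hBIcard : (B ∩ It).card + 1 = B.card := by
    conv_rhs => rw [hBeq]
    rw [card_insert_of_notMem heBI]
  have hsd : (It \ B).card = 1 := by
    have h1 := card_sdiff_add_card_inter It B
    have h2 : (It ∩ B).card = (B ∩ It).card := by rw [inter_comm]
    omega
  obtain ⟨f, hf⟩ := card_eq_one.mp hsd
  have hfIt : f ∈ It := (mem_sdiff.mp (hf ▸ mem_singleton_self f)).1
  have hfB : f ∉ B := (mem_sdiff.mp (hf ▸ mem_singleton_self f)).2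
  have hfP : f ∉ P := fun hfp => hfB (hTB (mem_insert_of_mem (mem_inter.mpr ⟨hfIt, hfp⟩)))
  have hIteq : It = insert f (B ∩ It) := by
    ext x
    simp only [mem_insert, mem_inter]
    constructor
    · intro hx
      by_cases hxB : x ∈ B
      · exact Or.inr ⟨hxB, hx⟩
      · have : x ∈ It \ B := mem_sdiff.mpr ⟨hx, hxB⟩
        exact Or.inl (mem_singleton.mp (hf ▸ this))
    · rintro (rfl | ⟨_, hx⟩) <;> [exact hfIt; exact hx]
  have hfBI : f ∉ B ∩ It := fun h' => hfB (mem_inter.mp h').1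
  have hwBe : setWeight wf B = wf e + setWeight wf (B ∩ It) := by
    conv_lhs => rw [hBeq]
    exact Finset.sum_insert heBI
  have hwIf : setWeight wf It = wf f + setWeight wf (B ∩ It) := by
    conv_lhs => rw [hIteq]
    exact Finset.sum_insert hfBI
  have := hw e heP f hfP
  rw [hwBe, hwIf] at hwB
  linarith

end FinMatroid

/-- local weight of `Z` inside ground set `s`. -/
def lw (π : E → ℝ) (s Z : Finset E) : ℝ := (∏ e ∈ Z, π e) * ∏ e ∈ s \ Z, (1 - π e)

lemma lw_nonneg {π : E → ℝ} (h0 : ∀ e, 0 ≤ π e) (h1 : ∀ e, π e ≤ 1) (s Z : Finset E) :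
    0 ≤ lw π s Z :=
  mul_nonneg (prod_nonneg fun e _ => h0 e) (prod_nonneg fun e _ => by linarith [h1 e])

lemma lw_insert_not_mem {π : E → ℝ} {a : E} {s Z : Finset E} (ha : a ∉ s) (hZ : Z ⊆ s) :
    lw π (insert a s) Z = (1 - π a) * lw π s Z := by
  have haZ : a ∉ Z := fun h => ha (hZ h)
  have h1 : (insert a s) \ Z = insert a (s \ Z) := insert_sdiff_of_notMem _ haZ
  have h2 : a ∉ s \ Z := fun h => ha (mem_sdiff.mp h).1
  rw [lw, lw, h1, prod_insert h2]; ring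

lemma lw_insert_mem {π : E → ℝ} {a : E} {s Z : Finset E} (ha : a ∉ s) (hZ : Z ⊆ s) :
    lw π (insert a s) (insert a Z) = π a * lw π s Z := by
  have haZ : a ∉ Z := fun h => ha (hZ h)
  have h1 : (insert a s) \ (insert a Z) = s \ Z := by
    ext x; simp only [mem_sdiff, mem_insert]
    constructor
    · rintro ⟨h2 | h2, h3⟩
      · exact absurd (Or.inl h2) h3
      · exact ⟨h2, fun h4 => h3 (Or.inr h4)⟩
    · rintro ⟨h2, h3⟩
      exact ⟨Or.inr h2, fun h4 => by rcases h4 with rfl | h4; exact ha h2; exact h3 h4⟩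
  rw [lw, lw, h1, prod_insert haZ]; ring

lemma sum_lw (π : E → ℝ) (s : Finset E) : ∑ Z ∈ s.powerset, lw π s Z = 1 := by
  induction s using Finset.induction_on with
  | empty => simp [lw]
  | insert _ _ ha ih =>
    rename_i a s
    rw [sum_powerset_insert ha]
    have e1 : ∀ Z ∈ s.powerset, lw π (insert a s) Z = (1 - π a) * lw π s Z :=
      fun Z hZ => lw_insert_not_mem ha (mem_powerset.mp hZ)
    have e2 : ∀ Z ∈ s.powerset, lw π (insert a s) (insert a Z) = π a * lw π s Z :=
      fun Z hZ => lw_insert_mem ha (mem_powerset.mp hZ)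
    rw [sum_congr rfl e1, sum_congr rfl e2, ← mul_sum, ← mul_sum, ih]
    ring

lemma sum_lw_mem (π : E → ℝ) {s : Finset E} {e : E} (hes : e ∈ s) :
    ∑ Z ∈ s.powerset, (if e ∈ Z then lw π s Z else 0) = π e := by
  have hrw : insert e (s.erase e) = s := insert_erase hes
  have hne : e ∉ s.erase e := notMem_erase e s
  rw [← hrw, sum_powerset_insert hne]
  have e1 : ∀ Z ∈ (s.erase e).powerset,
      (if e ∈ Z then lw π (insert e (s.erase e)) Z else 0) = 0 := by
    intro Z hZ
    have : e ∉ Z := fun h => hne (mem_powerset.mp hZ h)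
    simp [this]
  have e2 : ∀ Z ∈ (s.erase e).powerset,
      (if e ∈ insert e Z then lw π (insert e (s.erase e)) (insert e Z) else 0)
        = π e * lw π (s.erase e) Z := by
    intro Z hZ
    rw [if_pos (mem_insert_self _ _), lw_insert_mem hne (mem_powerset.mp hZ)]
  rw [sum_congr rfl e1, sum_congr rfl e2, ← mul_sum, sum_lw]
  simp

lemma sum_lw_count (π : E → ℝ) {s C : Finset E} (hC : C ⊆ s) :
    ∑ Z ∈ s.powerset, lw π s Z * ((Z ∩ C).card : ℝ) = ∑ e ∈ C, π e := by
  have hcard : ∀ Z : Finset E, ((Z ∩ C).card : ℝ) = ∑ e ∈ C, if e ∈ Z then (1:ℝ) else 0 := by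
    intro Z
    rw [sum_boole, filter_mem_eq_inter, inter_comm]
  calc ∑ Z ∈ s.powerset, lw π s Z * ((Z ∩ C).card : ℝ)
      = ∑ Z ∈ s.powerset, ∑ e ∈ C, (if e ∈ Z then lw π s Z else 0) := by
        refine sum_congr rfl fun Z _ => ?_
        rw [hcard, mul_sum]
        exact sum_congr rfl fun e _ => by split <;> simp
    _ = ∑ e ∈ C, ∑ Z ∈ s.powerset, (if e ∈ Z then lw π s Z else 0) := sum_comm
    _ = ∑ e ∈ C, π e := sum_congr rfl fun e he => sum_lw_mem π (hC he)

lemma expec_eq_double (π : E → ℝ) (J : Finset E) (f : Finset E → ℝ) :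
    expec π f = ∑ W ∈ Jᶜ.powerset, ∑ Z ∈ J.powerset, lw π Jᶜ W * (lw π J Z * f (Z ∪ W)) := by
  rw [expec, ← sum_product']
  refine sum_nbij' (i := fun A => (A \ J, A ∩ J)) (j := fun ZW => ZW.2 ∪ ZW.1)
    (fun A _ => mem_product.mpr ⟨mem_powerset.mpr (fun x hx => mem_compl.mpr (mem_sdiff.mp hx).2),
      mem_powerset.mpr inter_subset_right⟩)
    (fun ZW _ => mem_univ _)
    (fun A _ => by simp only; rw [union_comm, sdiff_union_inter])
    (fun ZW hZW => by
      obtain ⟨h1, h2⟩ := mem_product.mp hZW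
      have hZ : ZW.2 ⊆ J := mem_powerset.mp h2
      have hW : ZW.1 ⊆ Jᶜ := mem_powerset.mp h1
      have e1 : (ZW.2 ∪ ZW.1) \ J = ZW.1 := by
        ext x; simp only [mem_sdiff, mem_union]
        constructor
        · rintro ⟨h3 | h3, h4⟩; exact absurd (hZ h3) h4; exact h3
        · intro h3; exact ⟨Or.inr h3, mem_compl.mp (hW h3)⟩
      have e2 : (ZW.2 ∪ ZW.1) ∩ J = ZW.2 := by
        ext x; simp only [mem_inter, mem_union]
        constructor
        · rintro ⟨h3 | h3, h4⟩; exact h3; exact absurd h4 (mem_compl.mp (hW h3))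
        · intro h3; exact ⟨Or.inl h3, hZ h3⟩
      rw [e1, e2])
    (fun A _ => ?_)
  have h1 : (∏ e ∈ A, π e) = (∏ e ∈ A ∩ J, π e) * ∏ e ∈ A \ J, π e := by
    rw [prod_inter_mul_prod_diff]
  have hAc : Aᶜ = (J \ (A ∩ J)) ∪ (Jᶜ \ (A \ J)) := by
    ext x; simp only [mem_union, mem_sdiff, mem_compl, mem_inter]
    by_cases hxJ : x ∈ J <;> by_cases hxA : x ∈ A <;> simp [hxJ, hxA]
  have hdisj : Disjoint (J \ (A ∩ J)) (Jᶜ \ (A \ J)) := by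
    refine disjoint_left.mpr fun x hx h' => ?_
    exact (mem_compl.mp (mem_sdiff.mp h').1) (mem_sdiff.mp hx).1
  have h2 : (∏ e ∈ Aᶜ, (1 - π e))
      = (∏ e ∈ J \ (A ∩ J), (1 - π e)) * ∏ e ∈ Jᶜ \ (A \ J), (1 - π e) := by
    rw [hAc, prod_union hdisj]
  have h3 : (A ∩ J) ∪ (A \ J) = A := by rw [union_comm, sdiff_union_inter]
  have e3 : J \ (A ∩ J) = J \ A := by ext x; simp only [mem_sdiff, mem_inter]; tauto
  have e4 : Jᶜ \ (A \ J) = Jᶜ \ A := by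
    ext x; simp only [mem_sdiff, mem_compl]; tauto
  simp only [prodWeight, lw, h3, h1, h2, e3, e4]
  ring

/-- The key single-round estimate, conditioned on the sample outside `J`. -/
lemma key_inner (M : FinMatroid E) {p : ℝ} (hp0 : 0 ≤ p) (hp1 : p ≤ 1)
    (J A' B : Finset E) (hspan : M.rank (J ∪ B) = M.rank J) :
    p * ∑ Z ∈ J.powerset, lw (fun _ => p) J Z * (M.rank (Z ∪ A' ∪ B) : ℝ)
      + (1 - p) * (M.rank A' : ℝ)
    ≤ ∑ Z ∈ J.powerset, lw (fun _ => p) J Z * (M.rank (Z ∪ A') : ℝ) := by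
  have hlwnn : ∀ Z, 0 ≤ lw (fun _ => p) J Z :=
    lw_nonneg (fun _ => hp0) (fun _ => hp1) J
  obtain ⟨A₀, hA₀sub, hA₀ind, hA₀c⟩ := M.exists_basis A'
  obtain ⟨B₀, hA₀B₀, hB₀sub, hB₀ind, hB₀c⟩ :=
    M.exists_basis_superset (hA₀sub.trans subset_union_right) hA₀ind
  set C := B₀ \ A' with hCdef
  have hCJ : C ⊆ J := by
    intro x hx
    rcases mem_union.mp (hB₀sub (mem_sdiff.mp hx).1) with h | h
    · exact h
    · exact absurd h (mem_sdiff.mp hx).2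
  have hBA : (B₀ ∩ A').card = M.rank A' := le_antisymm
    (M.card_le_rank inter_subset_right (M.indep_subset hB₀ind inter_subset_left))
    (hA₀c ▸ card_le_card (subset_inter hA₀B₀ hA₀sub))
  have hCcard : C.card + M.rank A' = M.rank (J ∪ A') := by
    have h := card_sdiff_add_card_inter B₀ A'
    rw [← hCdef] at h
    omega
  have hpoint : ∀ Z ∈ J.powerset, ((Z ∩ C).card : ℝ) + (M.rank A' : ℝ) ≤ (M.rank (Z ∪ A') : ℝ) := by
    intro Z _
    have hZC : Z ∩ C ⊆ B₀ := inter_subset_right.trans sdiff_subset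
    have hdisj : Disjoint (Z ∩ C) A₀ := disjoint_left.mpr fun x hx h' =>
      (mem_sdiff.mp (inter_subset_right hx)).2 (hA₀sub h')
    have hind : M.Indep ((Z ∩ C) ∪ A₀) := M.indep_subset hB₀ind (union_subset hZC hA₀B₀)
    have hsub : (Z ∩ C) ∪ A₀ ⊆ Z ∪ A' :=
      union_subset (inter_subset_left.trans subset_union_left)
        (hA₀sub.trans subset_union_right)
    have h := M.card_le_rank hsub hind
    rw [card_union_of_disjoint hdisj, hA₀c] at h
    exact_mod_cast h
  have hpoint2 : ∀ Z ∈ J.powerset, (M.rank (Z ∪ A' ∪ B) : ℝ) ≤ (M.rank (J ∪ A') : ℝ) := by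
    intro Z hZ
    have h1 : Z ∪ A' ∪ B ⊆ J ∪ A' ∪ B :=
      union_subset_union (union_subset_union (mem_powerset.mp hZ) subset_rfl) subset_rfl
    exact_mod_cast (M.rank_mono h1).trans (M.rank_union_le_of_spanning hspan A')
  have step1 : p * ∑ Z ∈ J.powerset, lw (fun _ => p) J Z * (M.rank (Z ∪ A' ∪ B) : ℝ)
      ≤ p * (M.rank (J ∪ A') : ℝ) := by
    have h := sum_le_sum (fun Z hZ =>
      mul_le_mul_of_nonneg_left (hpoint2 Z hZ) (hlwnn Z))
    calc p * ∑ Z ∈ J.powerset, lw (fun _ => p) J Z * (M.rank (Z ∪ A' ∪ B) : ℝ)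
        ≤ p * ∑ Z ∈ J.powerset, lw (fun _ => p) J Z * (M.rank (J ∪ A') : ℝ) :=
          mul_le_mul_of_nonneg_left h hp0
      _ = p * (M.rank (J ∪ A') : ℝ) := by rw [← sum_mul, sum_lw, one_mul]
  have step2 : p * (M.rank (J ∪ A') : ℝ) + (1 - p) * (M.rank A' : ℝ)
      = ∑ Z ∈ J.powerset, lw (fun _ => p) J Z * (((Z ∩ C).card : ℝ) + (M.rank A' : ℝ)) := by
    have hcount := sum_lw_count (fun _ => p) hCJ
    have hsum := sum_lw (fun _ => p) J
    have hC : (∑ e ∈ C, (fun _ : E => p) e) = (C.card : ℝ) * p := by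
      rw [sum_const, nsmul_eq_mul]
    rw [hC] at hcount
    have hrk : (M.rank (J ∪ A') : ℝ) = (C.card : ℝ) + (M.rank A' : ℝ) := by
      exact_mod_cast congrArg (Nat.cast : ℕ → ℝ) hCcard.symm
    calc p * (M.rank (J ∪ A') : ℝ) + (1 - p) * (M.rank A' : ℝ)
        = (C.card : ℝ) * p + (M.rank A' : ℝ) := by rw [hrk]; ring
      _ = ∑ Z ∈ J.powerset, lw (fun _ => p) J Z * ((Z ∩ C).card : ℝ)
          + (∑ Z ∈ J.powerset, lw (fun _ => p) J Z) * (M.rank A' : ℝ) := by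
          rw [hcount, hsum, one_mul]
      _ = ∑ Z ∈ J.powerset, lw (fun _ => p) J Z * (((Z ∩ C).card : ℝ) + (M.rank A' : ℝ)) := by
          rw [sum_mul, ← sum_add_distrib]
          exact sum_congr rfl fun Z _ => by ring
  have step3 : ∑ Z ∈ J.powerset, lw (fun _ => p) J Z * (((Z ∩ C).card : ℝ) + (M.rank A' : ℝ))
      ≤ ∑ Z ∈ J.powerset, lw (fun _ => p) J Z * (M.rank (Z ∪ A') : ℝ) :=
    sum_le_sum fun Z hZ => mul_le_mul_of_nonneg_left (hpoint Z hZ) (hlwnn Z)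
  linarith

/-- The key one-round step, in expectation form. -/
lemma key_step (M : FinMatroid E) {p : ℝ} (hp0 : 0 ≤ p) (hp1 : p ≤ 1)
    (P S' J : Finset E) (hJP : J ⊆ P) (hS'P : S' ⊆ P) (hdisj : Disjoint J S')
    (hspan : ∀ B ⊆ P, Disjoint B S' → M.rank (J ∪ B) = M.rank J) :
    p * expec (fun _ => p) (fun A => (M.rank (A ∩ P) : ℝ))
      + (1 - p) * expec (fun _ => p) (fun A => (M.rank (A ∩ S') : ℝ))
    ≤ expec (fun _ => p) (fun A => (M.rank (A ∩ (S' ∪ J)) : ℝ)) := by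
  rw [expec_eq_double (fun _ => p) J, expec_eq_double (fun _ => p) J,
    expec_eq_double (fun _ => p) J, mul_sum, mul_sum, ← sum_add_distrib]
  refine sum_le_sum fun W hWmem => ?_
  have hW : W ⊆ Jᶜ := mem_powerset.mp hWmem
  have hlwnn : ∀ s Z : Finset E, 0 ≤ lw (fun _ : E => p) s Z :=
    lw_nonneg (fun _ => hp0) (fun _ => hp1)
  set A' := W ∩ S' with hA'def
  set B := (W ∩ P) \ S' with hBdef
  have hBP : B ⊆ P := sdiff_subset.trans inter_subset_right
  have hBS' : Disjoint B S' := sdiff_disjoint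
  have hspanB : M.rank (J ∪ B) = M.rank J := hspan B hBP hBS'
  have eq1 : ∀ Z ∈ J.powerset, (Z ∪ W) ∩ P = (Z ∪ A') ∪ B := by
    intro Z hZmem
    have hZ : Z ⊆ J := mem_powerset.mp hZmem
    ext x
    simp only [mem_inter, mem_union, hA'def, hBdef, mem_sdiff]
    constructor
    · rintro ⟨hz | hw, hp'⟩
      · exact Or.inl (Or.inl hz)
      · by_cases hs : x ∈ S'
        · exact Or.inl (Or.inr ⟨hw, hs⟩)
        · exact Or.inr ⟨⟨hw, hp'⟩, hs⟩
    · rintro ((hz | ⟨hw, hs⟩) | ⟨⟨hw, hp'⟩, _⟩)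
      · exact ⟨Or.inl hz, hJP (hZ hz)⟩
      · exact ⟨Or.inr hw, hS'P hs⟩
      · exact ⟨Or.inr hw, hp'⟩
  have eq2 : ∀ Z ∈ J.powerset, (Z ∪ W) ∩ S' = A' := by
    intro Z hZmem
    have hZ : Z ⊆ J := mem_powerset.mp hZmem
    ext x
    simp only [mem_inter, mem_union, hA'def]
    constructor
    · rintro ⟨hz | hw, hs⟩
      · exact absurd hs (disjoint_left.mp hdisj (hZ hz))
      · exact ⟨hw, hs⟩
    · rintro ⟨hw, hs⟩; exact ⟨Or.inr hw, hs⟩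
  have eq3 : ∀ Z ∈ J.powerset, (Z ∪ W) ∩ (S' ∪ J) = Z ∪ A' := by
    intro Z hZmem
    have hZ : Z ⊆ J := mem_powerset.mp hZmem
    ext x
    simp only [mem_inter, mem_union, hA'def]
    constructor
    · rintro ⟨hz | hw, hs | hj⟩
      · exact Or.inl hz
      · exact Or.inl hz
      · exact Or.inr ⟨hw, hs⟩
      · exact absurd hj (mem_compl.mp (hW hw))
    · rintro (hz | ⟨hw, hs⟩)
      · exact ⟨Or.inl hz, Or.inr (hZ hz)⟩
      · exact ⟨Or.inr hw, Or.inl hs⟩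
  have r1 : ∑ Z ∈ J.powerset, lw (fun _ => p) Jᶜ W * (lw (fun _ => p) J Z * (M.rank ((Z ∪ W) ∩ P) : ℝ))
      = lw (fun _ => p) Jᶜ W * ∑ Z ∈ J.powerset, lw (fun _ => p) J Z * (M.rank (Z ∪ A' ∪ B) : ℝ) := by
    rw [mul_sum]
    exact sum_congr rfl fun Z hZ => by rw [eq1 Z hZ]
  have r2 : ∑ Z ∈ J.powerset, lw (fun _ => p) Jᶜ W * (lw (fun _ => p) J Z * (M.rank ((Z ∪ W) ∩ S') : ℝ))
      = lw (fun _ => p) Jᶜ W * (M.rank A' : ℝ) := by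
    have : ∀ Z ∈ J.powerset, lw (fun _ : E => p) Jᶜ W * (lw (fun _ : E => p) J Z * (M.rank ((Z ∪ W) ∩ S') : ℝ))
        = lw (fun _ : E => p) Jᶜ W * (M.rank A' : ℝ) * lw (fun _ : E => p) J Z := by
      intro Z hZ; rw [eq2 Z hZ]; ring
    rw [sum_congr rfl this, ← mul_sum, sum_lw, mul_one]
  have r3 : ∑ Z ∈ J.powerset, lw (fun _ => p) Jᶜ W * (lw (fun _ => p) J Z * (M.rank ((Z ∪ W) ∩ (S' ∪ J)) : ℝ))
      = lw (fun _ => p) Jᶜ W * ∑ Z ∈ J.powerset, lw (fun _ => p) J Z * (M.rank (Z ∪ A') : ℝ) := by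
    rw [mul_sum]
    exact sum_congr rfl fun Z hZ => by rw [eq3 Z hZ]
  rw [r1, r2, r3]
  have hkey := key_inner M hp0 hp1 J A' B hspanB
  calc p * (lw (fun _ => p) Jᶜ W * ∑ Z ∈ J.powerset, lw (fun _ => p) J Z * (M.rank (Z ∪ A' ∪ B) : ℝ))
      + (1 - p) * (lw (fun _ => p) Jᶜ W * (M.rank A' : ℝ))
      = lw (fun _ => p) Jᶜ W * (p * ∑ Z ∈ J.powerset, lw (fun _ => p) J Z * (M.rank (Z ∪ A' ∪ B) : ℝ)
          + (1 - p) * (M.rank A' : ℝ)) := by ring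
    _ ≤ lw (fun _ => p) Jᶜ W * ∑ Z ∈ J.powerset, lw (fun _ => p) J Z * (M.rank (Z ∪ A') : ℝ) :=
        mul_le_mul_of_nonneg_left hkey (hlwnn _ _)

lemma prefixUnion_zero (I : ℕ → Finset E) : prefixUnion I 0 = ∅ := by
  simp [prefixUnion]

lemma prefixUnion_succ (I : ℕ → Finset E) (t : ℕ) :
    prefixUnion I (t + 1) = prefixUnion I t ∪ I (t + 1) := by
  unfold prefixUnion
  rw [show Finset.Icc 1 (t + 1) = insert (t + 1) (Finset.Icc 1 t) from
    (Finset.insert_Icc_right_eq_Icc_add_one (by omega)).symm]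
  rw [biUnion_insert, union_comm]


/-- The greedy (repeated maximum-weight base) sparsifier preserves the
expected rank of every weight-prefix: if `I_t` is a maximum-weight base of
`M ∖ (I_1 ∪ ⋯ ∪ I_{t-1})` for every `t = 1, …, τ` and `Q = I_1 ∪ ⋯ ∪ I_τ`, then for
every `j` with `w_j > w_{j+1}`,
`E[Rank(Q ∩ R ∩ {e_1,…,e_j})] ≥ (1 − (1−p)^τ) · E[Rank(R ∩ {e_1,…,e_j})]`. -/
theorem stmt_8 (n : ℕ) (M : FinMatroid (Fin n)) (w : ℕ → ℝ)
    (hwpos : ∀ j ∈ Finset.Icc 1 n, 0 < w j)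
    (hwdec : ∀ i j, 1 ≤ i → i ≤ j → j ≤ n → w j ≤ w i)
    (hwlast : w (n + 1) = 0)
    (p : ℝ) (hp0 : 0 ≤ p) (hp1 : p ≤ 1)
    (τ : ℕ) (hτ : 0 < τ)
    (I : ℕ → Finset (Fin n))
    (hI : ∀ t ∈ Finset.Icc 1 τ,
      IsMaxWeightBase M (fun x : Fin n => w ((x : ℕ) + 1)) ((prefixUnion I (t - 1))ᶜ) (I t))
    (Q : Finset (Fin n)) (hQ : Q = prefixUnion I τ) :
    ∀ j ∈ Finset.Icc 1 n, w (j + 1) < w j →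
      (1 - (1 - p) ^ τ) * expec (fun _ => p) (fun A => (M.rank (A ∩ prefixSet n j) : ℝ))
        ≤ expec (fun _ => p) (fun A => (M.rank (Q ∩ A ∩ prefixSet n j) : ℝ)) := by
  intro j hj hgap
  obtain ⟨hj1, hjn⟩ := Finset.mem_Icc.mp hj
  set P := prefixSet n j with hP
  have hwP : ∀ e ∈ P, ∀ f ∉ P,
      (fun x : Fin n => w ((x : ℕ) + 1)) f < (fun x : Fin n => w ((x : ℕ) + 1)) e := by
    intro e he f hf
    rw [hP, prefixSet, Finset.mem_filter] at he
    have he' : (e : ℕ) + 1 ≤ j := he.2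
    have hf' : ¬((f : ℕ) + 1 ≤ j) := fun h =>
      hf (by rw [hP, prefixSet]; exact Finset.mem_filter.mpr ⟨Finset.mem_univ _, h⟩)
    have hfn : (f : ℕ) < n := f.isLt
    have h1 : w ((f : ℕ) + 1) ≤ w (j + 1) :=
      hwdec (j + 1) ((f : ℕ) + 1) (by omega) (by omega) (by omega)
    have h2 : w j ≤ w ((e : ℕ) + 1) := hwdec ((e : ℕ) + 1) j (by omega) he' hjn
    simpa using lt_of_le_of_lt h1 (lt_of_lt_of_le hgap h2)
  have hspan : ∀ t, 1 ≤ t → t ≤ τ → ∀ B ⊆ P, Disjoint B (prefixUnion I (t - 1) ∩ P) →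
      M.rank ((I t ∩ P) ∪ B) = M.rank (I t ∩ P) := by
    intro t ht1 ht2 B hBP hBdisj
    have hmb := hI t (Finset.mem_Icc.mpr ⟨ht1, ht2⟩)
    have hstruct := M.maxweight_base_prefix P hmb hwP
    have hIsub : I t ⊆ (prefixUnion I (t - 1))ᶜ := hmb.1
    have hsub : (I t ∩ P) ∪ B ⊆ (prefixUnion I (t - 1))ᶜ ∩ P := by
      apply union_subset
      · exact inter_subset_inter hIsub subset_rfl
      · intro x hx
        refine mem_inter.mpr ⟨mem_compl.mpr fun hxU => ?_, hBP hx⟩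
        exact disjoint_left.mp hBdisj hx (mem_inter.mpr ⟨hxU, hBP hx⟩)
    refine le_antisymm ?_ (M.rank_mono subset_union_left)
    calc M.rank ((I t ∩ P) ∪ B) ≤ M.rank ((prefixUnion I (t - 1))ᶜ ∩ P) := M.rank_mono hsub
      _ = M.rank (I t ∩ P) := hstruct.symm
  have main : ∀ t, t ≤ τ →
      (1 - (1 - p) ^ t) * expec (fun _ => p) (fun A => (M.rank (A ∩ P) : ℝ))
        ≤ expec (fun _ => p) (fun A => (M.rank (A ∩ (prefixUnion I t ∩ P)) : ℝ)) := by
    intro t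
    induction t with
    | zero =>
      intro _
      rw [prefixUnion_zero]
      simp [expec, FinMatroid.rank_empty]
    | succ t ih =>
      intro ht
      have hmb := hI (t + 1) (Finset.mem_Icc.mpr ⟨by omega, ht⟩)
      have hIsub : I (t + 1) ⊆ (prefixUnion I t)ᶜ := by
        have := hmb.1
        simpa using this
      have hd : Disjoint (I (t + 1) ∩ P) (prefixUnion I t ∩ P) := by
        refine disjoint_left.mpr fun x hx h' => ?_
        exact mem_compl.mp (hIsub (mem_inter.mp hx).1) (mem_inter.mp h').1
      have hs : ∀ B ⊆ P, Disjoint B (prefixUnion I t ∩ P) →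
          M.rank ((I (t + 1) ∩ P) ∪ B) = M.rank (I (t + 1) ∩ P) := by
        have h := hspan (t + 1) (by omega) ht
        simpa using h
      have hstep := key_step M hp0 hp1 P (prefixUnion I t ∩ P) (I (t + 1) ∩ P)
        inter_subset_right inter_subset_right hd hs
      have hset : (prefixUnion I t ∩ P) ∪ (I (t + 1) ∩ P) = prefixUnion I (t + 1) ∩ P := by
        rw [prefixUnion_succ, union_inter_distrib_right]
      rw [hset] at hstep
      have hq : (0:ℝ) ≤ 1 - p := by linarith
      have hih := mul_le_mul_of_nonneg_left (ih (by omega)) hq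
      calc (1 - (1 - p) ^ (t + 1)) * expec (fun _ => p) (fun A => (M.rank (A ∩ P) : ℝ))
          = p * expec (fun _ => p) (fun A => (M.rank (A ∩ P) : ℝ))
            + (1 - p) * ((1 - (1 - p) ^ t)
              * expec (fun _ => p) (fun A => (M.rank (A ∩ P) : ℝ))) := by ring
        _ ≤ p * expec (fun _ => p) (fun A => (M.rank (A ∩ P) : ℝ))
            + (1 - p) * expec (fun _ => p)
              (fun A => (M.rank (A ∩ (prefixUnion I t ∩ P)) : ℝ)) := by linarith
        _ ≤ expec (fun _ => p) (fun A => (M.rank (A ∩ (prefixUnion I (t + 1) ∩ P)) : ℝ)) := hstep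
  have hfin := main τ le_rfl
  have hfun : (fun A : Finset (Fin n) => (M.rank (Q ∩ A ∩ P) : ℝ))
      = fun A => (M.rank (A ∩ (prefixUnion I τ ∩ P)) : ℝ) := by
    funext A
    have hAeq : Q ∩ A ∩ P = A ∩ (prefixUnion I τ ∩ P) := by
      rw [hQ]; ext x; simp only [mem_inter]; tauto
    rw [hAeq]
  rw [hfun]
  exact hfin
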